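/- arXiv:1703.00147 — 3 statements merged into one kernel-verified Lean document; each statement's English description precedes it below -/
import Mathlib

section
/- Let f(x, y) = ln(1 + x²/y) for x ∈ ℝ, y > 0. Then for any fixed point (x₀, y₀) with y₀ > 0, and all (x, y) with y > 0: f(x, y) ≥ f(x₀, y₀) - x₀²/y₀ + 2·x₀·x/y₀ - (x₀²/y₀)·(y + x²)/(y₀ + x₀²). -/
/-!
Write `u = 1 + x²/y`. Since `1 - 1/t ≤ log t`, the logarithm lies above its tangent in `1/u`:
`log u ≥ log u₀ + 1 - u₀/u`. With `s = y + x²` we have `u₀/u = (s₀/y₀)(1 - x²/s)`, and the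
quadratic-over-linear function `x²/s` lies above its tangent plane at `(x₀, s₀)`.
-/

lemma Real.log_add_one_sub_div_le_log {u₀ u : ℝ} (hu₀ : 0 < u₀) (hu : 0 < u) :
    Real.log u₀ + 1 - u₀ / u ≤ Real.log u := by
  have h := Real.one_sub_inv_le_log_of_pos (div_pos hu hu₀)
  rw [inv_div, Real.log_div hu.ne' hu₀.ne'] at h
  linarith

lemma two_mul_mul_sub_sq_mul_le_sq_div (c x : ℝ) {s : ℝ} (hs : 0 < s) :
    2 * c * x - c ^ 2 * s ≤ x ^ 2 / s := by
  rw [le_div_iff₀ hs]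
  nlinarith [sq_nonneg (x - c * s)]

theorem stmt_2 (x₀ y₀ : ℝ) (hy₀ : 0 < y₀) (x y : ℝ) (hy : 0 < y) :
    Real.log (1 + x ^ 2 / y) ≥
      Real.log (1 + x₀ ^ 2 / y₀) - x₀ ^ 2 / y₀ + 2 * x₀ * x / y₀ -
        (x₀ ^ 2 / y₀) * ((y + x ^ 2) / (y₀ + x₀ ^ 2)) := by
  have hs : 0 < y + x ^ 2 := by positivity
  have hs₀ : 0 < y₀ + x₀ ^ 2 := by positivity
  have hratio : (1 + x₀ ^ 2 / y₀) / (1 + x ^ 2 / y) =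
      (y₀ + x₀ ^ 2) / y₀ * (1 - x ^ 2 / (y + x ^ 2)) := by
    field_simp
    ring
  have hquad := two_mul_mul_sub_sq_mul_le_sq_div (x₀ / (y₀ + x₀ ^ 2)) x hs
  calc Real.log (1 + x₀ ^ 2 / y₀) - x₀ ^ 2 / y₀ + 2 * x₀ * x / y₀ -
        (x₀ ^ 2 / y₀) * ((y + x ^ 2) / (y₀ + x₀ ^ 2))
      = Real.log (1 + x₀ ^ 2 / y₀) - x₀ ^ 2 / y₀ + (y₀ + x₀ ^ 2) / y₀ *
          (2 * (x₀ / (y₀ + x₀ ^ 2)) * x - (x₀ / (y₀ + x₀ ^ 2)) ^ 2 * (y + x ^ 2)) := by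
        field_simp
        ring
    _ ≤ Real.log (1 + x₀ ^ 2 / y₀) - x₀ ^ 2 / y₀ + (y₀ + x₀ ^ 2) / y₀ * (x ^ 2 / (y + x ^ 2)) := by
        gcongr
    _ = Real.log (1 + x₀ ^ 2 / y₀) + 1 - (1 + x₀ ^ 2 / y₀) / (1 + x ^ 2 / y) := by
        rw [hratio]
        field_simp
        ring
    _ ≤ Real.log (1 + x ^ 2 / y) := Real.log_add_one_sub_div_le_log (by positivity) (by positivity)
end

section
/- S-procedure (complex case, single constraint): Let A, B be n×n Hermitian matrices, b, c ∈ ℂⁿ, and d, e ∈ ℝ. Suppose there exists x̄ with x̄^H A x̄ + 2Re(b^H x̄) + d < 0. Then the implication 'x^H A x + 2Re(b^H x) + d ≤ 0 ⟹ x^H B x + 2Re(c^H x) + e ≤ 0' holds for all x ∈ ℂⁿ if and only if there exists ω ≥ 0 such that the block matrix [[ωA - B, ωb - c], [(ωb - c)^H, ωd - e]] is positive semidefinite. -/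
/-!
Homogenize: with `y = (x, t)`, the inhomogeneous quadratic functions become the Hermitian
forms of the bordered matrices `[[A, b], [bᴴ, d]]` and `[[B, c], [cᴴ, e]]` on `ℂⁿ⁺¹`, and by
scaling and density the implication becomes `qA y < 0 → qB y ≤ 0`. Over `ℂ` the joint range
`{(qA y, qB y)}` of two Hermitian forms is convex: between two points of it one can move along
`cos θ • y₁ + sin θ • ζ • y₂`, where the phase `ζ` kills the cross term of the form orthogonal
to the chord, so the path stays on the chord's line and sweeps it by the intermediate value
theorem. Separating this convex set from the open quadrant `{u < 0 < v}` gives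
`α qA + β qB ≥ 0` with `α ≥ 0 ≥ β`, and the Slater point forces `β < 0`; then `ω = α / -β`.
The converse is the quadratic form of the positive semidefinite matrix at `(x, 1)`.
-/

open Matrix ComplexOrder

theorem forall_nonpos_of_dense {X : Type*} [TopologicalSpace X] {f g : X → ℝ}
    (hf : Continuous f) (hg : Continuous g) {D : Set X} (hD : Dense D)
    (h : ∀ y ∈ D, f y < 0 → g y ≤ 0) (y : X) (hy : f y < 0) : g y ≤ 0 := by
  by_contra! hgy
  obtain ⟨z, ⟨hfz, hgz⟩, hzD⟩ := hD.inter_open_nonempty {y | f y < 0 ∧ 0 < g y}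
    ((isOpen_lt hf continuous_const).inter (isOpen_lt continuous_const hg)) ⟨y, hy, hgy⟩
  exact (h z hzD hfz).not_gt hgz

theorem dense_setOf_apply_ne_zero {ι 𝕜 : Type*} [NontriviallyNormedField 𝕜] (i : ι) :
    Dense {y : ι → 𝕜 | y i ≠ 0} :=
  (dense_compl_singleton 0).preimage (isOpenMap_eval i)

lemma Complex.exists_normSq_eq_one_re_mul_eq_zero (w : ℂ) :
    ∃ ζ : ℂ, Complex.normSq ζ = 1 ∧ (ζ * w).re = 0 := by
  rcases eq_or_ne w 0 with rfl | hw
  · exact ⟨1, by simp⟩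
  · refine ⟨Complex.I * ‖w‖ / w, ?_, ?_⟩
    · rw [Complex.normSq_div, Complex.normSq_mul, Complex.normSq_I, Complex.normSq_ofReal,
        one_mul, Complex.normSq_eq_norm_sq, sq, div_self (by positivity)]
    · rw [div_mul_cancel₀ _ hw, Complex.re_mul_ofReal, Complex.I_re, zero_mul]

lemma Prod.eq_of_dot_eq_of_cross_eq {d u v : ℝ × ℝ} (hd : d ≠ 0)
    (hdot : d.1 * u.1 + d.2 * u.2 = d.1 * v.1 + d.2 * v.2)
    (hcross : d.1 * u.2 - d.2 * u.1 = d.1 * v.2 - d.2 * v.1) : u = v := by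
  have hpos : d.1 ^ 2 + d.2 ^ 2 ≠ 0 := by
    contrapose! hd
    ext <;> simp <;> nlinarith
  ext
  · exact mul_left_cancel₀ hpos (by linear_combination d.1 * hdot - d.2 * hcross)
  · exact mul_left_cancel₀ hpos (by linear_combination d.2 * hdot + d.1 * hcross)

theorem exists_nonneg_forall_snd_le_mul_fst {W : Set (ℝ × ℝ)} (hW : Convex ℝ W) (h0 : 0 ∈ W)
    (himp : ∀ p ∈ W, p.1 < 0 → p.2 ≤ 0) (hslater : ∃ p ∈ W, p.1 < 0) :
    ∃ ω : ℝ, 0 ≤ ω ∧ ∀ p ∈ W, p.2 ≤ ω * p.1 := by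
  have hdisj : Disjoint (Set.Iio (0 : ℝ) ×ˢ Set.Ioi (0 : ℝ)) W :=
    Set.disjoint_left.mpr fun p hpK hpW => (himp p hpW hpK.1).not_gt hpK.2
  obtain ⟨f, u, hfK, hfW⟩ := geometric_hahn_banach_open ((convex_Iio 0).prod (convex_Ioi 0))
    (isOpen_Iio.prod isOpen_Ioi) hW hdisj
  set α := f (1, 0)
  set β := f (0, 1)
  have hf (p : ℝ × ℝ) : f p = p.1 * α + p.2 * β := by
    conv_lhs => rw [show p = p.1 • (1, 0) + p.2 • (0, 1) by ext <;> simp]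
    rw [map_add, map_smul, map_smul, smul_eq_mul, smul_eq_mul]
  have hfK' : ∀ p ∈ Set.Iic (0 : ℝ) ×ˢ Set.Ici (0 : ℝ), f p ≤ u := by
    rw [← closure_Iio, ← closure_Ioi, ← closure_prod_eq]
    exact fun p hp => closure_lt_subset_le f.continuous continuous_const (closure_mono hfK hp)
  have hα : -α ≤ u := by simpa [hf] using hfK' (-1, 0) (by simp)
  have hβ : β ≤ u := by simpa [hf] using hfK' (0, 1) (by simp)
  have hu : 0 ≤ u := by simpa using hfK' 0 (by simp)
  have hu' : u ≤ 0 := by simpa using hfW 0 h0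
  have hβα : -α + β < u := by simpa [hf] using hfK (-1, 1) (by simp)
  have hW' (p) (hp : p ∈ W) : 0 ≤ p.1 * α + p.2 * β := by linarith [hf p ▸ hfW p hp]
  obtain ⟨p₀, hp₀W, hp₀⟩ := hslater
  have hβneg : β < 0 := by
    by_contra! hβ0
    have h₀ := hW' p₀ hp₀W
    rw [show β = 0 by linarith, mul_zero, add_zero] at h₀
    nlinarith
  refine ⟨α / -β, div_nonneg (by linarith) (by linarith), fun p hp => ?_⟩
  rw [div_mul_eq_mul_div, le_div_iff₀ (by linarith)]
  linarith [hW' p hp]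

namespace Matrix

section QuadraticForm

variable {m : Type*} [Fintype m]

noncomputable def qform (M : Matrix m m ℂ) (y : m → ℂ) : ℝ := (star y ⬝ᵥ M *ᵥ y).re

lemma continuous_qform (M : Matrix m m ℂ) : Continuous (qform M) := by
  unfold qform; fun_prop

@[simp]
lemma qform_zero (M : Matrix m m ℂ) : qform M 0 = 0 := by simp [qform]

lemma add_qform (M N : Matrix m m ℂ) (y : m → ℂ) : qform (M + N) y = qform M y + qform N y := by
  simp only [qform, add_mulVec, dotProduct_add, Complex.add_re]

lemma sub_qform (M N : Matrix m m ℂ) (y : m → ℂ) : qform (M - N) y = qform M y - qform N y := by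
  simp only [qform, sub_mulVec, dotProduct_sub, Complex.sub_re]

lemma smul_qform (r : ℝ) (M : Matrix m m ℂ) (y : m → ℂ) : qform (r • M) y = r * qform M y := by
  simp only [qform, ← Complex.coe_smul, smul_mulVec, dotProduct_smul, smul_eq_mul,
    Complex.re_ofReal_mul]

lemma qform_smul (t : ℂ) (M : Matrix m m ℂ) (y : m → ℂ) :
    qform M (t • y) = Complex.normSq t * qform M y := by
  simp only [qform, star_smul, mulVec_smul, smul_dotProduct, dotProduct_smul, smul_eq_mul,
    Complex.star_def, ← mul_assoc, Complex.mul_conj, Complex.re_ofReal_mul]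

variable {M : Matrix m m ℂ}

lemma IsHermitian.star_dotProduct_mulVec_comm (hM : M.IsHermitian) (u v : m → ℂ) :
    star v ⬝ᵥ M *ᵥ u = star (star u ⬝ᵥ M *ᵥ v) := by
  rw [star_dotProduct, star_mulVec, ← dotProduct_mulVec, hM.eq]

lemma IsHermitian.ofReal_qform (hM : M.IsHermitian) (y : m → ℂ) :
    (qform M y : ℂ) = star y ⬝ᵥ M *ᵥ y :=
  Complex.ext rfl (hM.im_star_dotProduct_mulVec_self y).symm

lemma IsHermitian.posSemidef_iff_qform_nonneg (hM : M.IsHermitian) :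
    M.PosSemidef ↔ ∀ y, 0 ≤ qform M y := by
  simp only [posSemidef_iff_dotProduct_mulVec, hM, true_and, ← hM.ofReal_qform,
    Complex.zero_le_real]

lemma IsHermitian.qform_add (hM : M.IsHermitian) (u v : m → ℂ) :
    qform M (u + v) = qform M u + qform M v + 2 * (star u ⬝ᵥ M *ᵥ v).re := by
  have hvu : (star v ⬝ᵥ M *ᵥ u).re = (star u ⬝ᵥ M *ᵥ v).re := by
    rw [hM.star_dotProduct_mulVec_comm]; rfl
  simp only [qform, star_add, mulVec_add, add_dotProduct, dotProduct_add, Complex.add_re, hvu]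
  ring

lemma IsHermitian.qform_smul_add_smul (hM : M.IsHermitian) (s t : ℂ) (u v : m → ℂ) :
    qform M (s • u + t • v) = Complex.normSq s * qform M u + Complex.normSq t * qform M v
      + 2 * (star s * t * (star u ⬝ᵥ M *ᵥ v)).re := by
  rw [hM.qform_add, qform_smul, qform_smul, star_smul, mulVec_smul, smul_dotProduct,
    dotProduct_smul, smul_eq_mul, smul_eq_mul, mul_assoc]

lemma IsHermitian.exists_path_qform_eq (hM : M.IsHermitian) {y₁ y₂ : m → ℂ}
    (h : qform M y₁ = qform M y₂) :
    ∃ γ : ℝ → m → ℂ, Continuous γ ∧ γ 0 = y₁ ∧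
      (∀ N : Matrix m m ℂ, qform N (γ (Real.pi / 2)) = qform N y₂) ∧
      ∀ θ, qform M (γ θ) = qform M y₁ := by
  obtain ⟨ζ, hζ, hre⟩ := Complex.exists_normSq_eq_one_re_mul_eq_zero (star y₁ ⬝ᵥ M *ᵥ y₂)
  refine ⟨fun θ => (Real.cos θ : ℂ) • y₁ + ((Real.sin θ : ℂ) * ζ) • y₂, by fun_prop,
    by simp, fun N => by simp [qform_smul, hζ], fun θ => ?_⟩
  have hcross : star (Real.cos θ : ℂ) * (Real.sin θ * ζ) * (star y₁ ⬝ᵥ M *ᵥ y₂)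
      = (Real.cos θ * Real.sin θ : ℝ) * (ζ * (star y₁ ⬝ᵥ M *ᵥ y₂)) := by
    rw [Complex.star_def, Complex.conj_ofReal]; push_cast; ring
  rw [hM.qform_smul_add_smul, hcross, Complex.re_ofReal_mul, hre, Complex.normSq_mul, hζ,
    Complex.normSq_ofReal, Complex.normSq_ofReal, ← h]
  linear_combination qform M y₁ * Real.cos_sq_add_sin_sq θ

theorem convex_range_qform {A B : Matrix m m ℂ} (hA : A.IsHermitian) (hB : B.IsHermitian) :
    Convex ℝ (Set.range fun y => (qform A y, qform B y)) := by
  rintro _ ⟨y₁, rfl⟩ _ ⟨y₂, rfl⟩ a b ha hb hab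
  dsimp only
  set p₁ : ℝ × ℝ := (qform A y₁, qform B y₁)
  set p₂ : ℝ × ℝ := (qform A y₂, qform B y₂)
  rcases eq_or_ne p₂ p₁ with hp | hp
  · exact ⟨y₂, by rw [← hp, ← add_smul, hab, one_smul]⟩
  set d := p₂ - p₁
  have hd : d ≠ 0 := sub_ne_zero.mpr hp
  -- `M` measures the component orthogonal to the chord `d`, `N` the component along it.
  set M := (-d.2) • A + d.1 • B
  set N := d.1 • A + d.2 • B
  have hM : M.IsHermitian :=
    (hA.smul (IsSelfAdjoint.all _)).add (hB.smul (IsSelfAdjoint.all _))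
  have qM (y) : qform M y = -d.2 * qform A y + d.1 * qform B y := by
    rw [add_qform, smul_qform, smul_qform]
  have qN (y) : qform N y = d.1 * qform A y + d.2 * qform B y := by
    rw [add_qform, smul_qform, smul_qform]
  obtain ⟨γ, hγ, hγ₀, hγ₁, hγM⟩ := hM.exists_path_qform_eq (y₁ := y₁) (y₂ := y₂)
    (by simp only [qM, d, p₁, p₂, Prod.fst_sub, Prod.snd_sub]; ring)
  have hmem : a * qform N y₁ + b * qform N y₂
      ∈ Set.uIcc (qform N (γ 0)) (qform N (γ (Real.pi / 2))) := by
    rw [hγ₀, hγ₁, ← segment_eq_uIcc]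
    exact ⟨a, b, ha, hb, hab, rfl⟩
  obtain ⟨θ, -, hθ⟩ := intermediate_value_uIcc ((continuous_qform N).comp hγ).continuousOn hmem
  refine ⟨γ θ, Prod.eq_of_dot_eq_of_cross_eq hd ?_ ?_⟩
  · simp only [Function.comp_apply, qN] at hθ
    simp only [Prod.smul_fst, Prod.smul_snd, Prod.fst_add, Prod.snd_add, smul_eq_mul]
    linear_combination hθ
  · obtain rfl : a = 1 - b := eq_sub_of_add_eq hab
    have hθM := hγM θ
    simp only [qM, d, p₁, p₂, Prod.fst_sub, Prod.snd_sub] at hθM ⊢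
    simp only [Prod.smul_fst, Prod.smul_snd, Prod.fst_add, Prod.snd_add, smul_eq_mul]
    linear_combination hθM

theorem exists_nonneg_forall_qform_le_mul {A B : Matrix m m ℂ} (hA : A.IsHermitian)
    (hB : B.IsHermitian) (himp : ∀ y, qform A y < 0 → qform B y ≤ 0)
    (hslater : ∃ y, qform A y < 0) :
    ∃ ω : ℝ, 0 ≤ ω ∧ ∀ y, qform B y ≤ ω * qform A y := by
  obtain ⟨y₀, hy₀⟩ := hslater
  obtain ⟨ω, hω, hle⟩ := exists_nonneg_forall_snd_le_mul_fst (convex_range_qform hA hB)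
    ⟨0, by simp⟩ (by rintro _ ⟨y, rfl⟩; exact himp y) ⟨_, ⟨y₀, rfl⟩, hy₀⟩
  exact ⟨ω, hω, fun y => hle _ ⟨y, rfl⟩⟩

end QuadraticForm

section Homogenization

variable {m : Type*}

def homogMatrix (A : Matrix m m ℂ) (b : m → ℂ) (d : ℝ) : Matrix (m ⊕ Fin 1) (m ⊕ Fin 1) ℂ :=
  fromBlocks A (replicateCol (Fin 1) b) (replicateRow (Fin 1) (star b)) (of fun _ _ => (d : ℂ))

lemma IsHermitian.homogMatrix {A : Matrix m m ℂ} (hA : A.IsHermitian) (b : m → ℂ) (d : ℝ) :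
    (homogMatrix A b d).IsHermitian := by
  refine hA.fromBlocks (by rw [conjTranspose_replicateCol]) ?_
  ext
  simp

lemma smul_homogMatrix_sub_homogMatrix (A B : Matrix m m ℂ) (b c : m → ℂ) (d e ω : ℝ) :
    ω • homogMatrix A b d - homogMatrix B c e = fromBlocks (ω • A - B)
      (replicateCol (Fin 1) (ω • b - c)) (replicateRow (Fin 1) (star (ω • b - c)))
      (of fun _ _ => ((ω * d - e : ℝ) : ℂ)) := by
  ext (i | i) (j | j) <;> simp [homogMatrix]

variable [Fintype m]

noncomputable def quadFun (A : Matrix m m ℂ) (b : m → ℂ) (d : ℝ) (x : m → ℂ) : ℝ :=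
  qform A x + 2 * (star b ⬝ᵥ x).re + d

lemma qform_homogMatrix_sumElim_one (A : Matrix m m ℂ) (b : m → ℂ) (d : ℝ) (x : m → ℂ) :
    qform (homogMatrix A b d) (Sum.elim x 1) = quadFun A b d x := by
  have hb : replicateCol (Fin 1) b *ᵥ 1 = b := by ext; simp [mulVec, dotProduct]
  have hd : of (fun _ _ : Fin 1 => (d : ℂ)) *ᵥ 1 = fun _ => (d : ℂ) := by
    ext; simp [mulVec, dotProduct]
  simp only [qform, Function.star_sumElim, star_one, homogMatrix, fromBlocks_mulVec,
    Sum.elim_comp_inl, Sum.elim_comp_inr, hb, replicateRow_mulVec_eq_const, hd,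
    sumElim_dotProduct_sumElim, dotProduct_add, star_dotProduct x b, RCLike.star_def,
    one_dotProduct, Finset.univ_unique, Fin.default_eq_zero, Fin.isValue, Function.const_apply,
    Finset.sum_const, Finset.card_singleton, one_smul, Complex.add_re, Complex.conj_re,
    Complex.ofReal_re, quadFun]
  ring

lemma qform_homogMatrix_of_ne_zero (A : Matrix m m ℂ) (b : m → ℂ) (d : ℝ)
    {y : m ⊕ Fin 1 → ℂ} (hy : y (Sum.inr 0) ≠ 0) :
    qform (homogMatrix A b d) y
      = Complex.normSq (y (Sum.inr 0)) * quadFun A b d ((y (Sum.inr 0))⁻¹ • (y ∘ Sum.inl)) := by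
  have hy' : y = y (Sum.inr 0) • Sum.elim ((y (Sum.inr 0))⁻¹ • (y ∘ Sum.inl)) 1 := by
    ext (i | i)
    · simp [hy]
    · simp [Fin.fin_one_eq_zero i]
  conv_lhs => rw [hy']
  rw [qform_smul, qform_homogMatrix_sumElim_one]

lemma qform_homogMatrix_nonpos_of_neg {A B : Matrix m m ℂ} {b c : m → ℂ} {d e : ℝ}
    (himp : ∀ x, quadFun A b d x ≤ 0 → quadFun B c e x ≤ 0) (y : m ⊕ Fin 1 → ℂ)
    (hy : qform (homogMatrix A b d) y < 0) : qform (homogMatrix B c e) y ≤ 0 := by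
  refine forall_nonpos_of_dense (continuous_qform _) (continuous_qform _)
    (dense_setOf_apply_ne_zero (Sum.inr 0)) (fun z (hz : z (Sum.inr 0) ≠ 0) hneg => ?_) y hy
  rw [qform_homogMatrix_of_ne_zero _ _ _ hz] at hneg ⊢
  exact mul_nonpos_of_nonneg_of_nonpos (Complex.normSq_nonneg _)
    (himp _ (neg_of_mul_neg_right hneg (Complex.normSq_nonneg _)).le)

end Homogenization

end Matrix

open Matrix ComplexOrder in
theorem stmt_5 {n : ℕ} (A B : Matrix (Fin n) (Fin n) ℂ)
    (hA : A.IsHermitian) (hB : B.IsHermitian)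
    (b c : Fin n → ℂ) (d e : ℝ)
    (hSlater : ∃ x : Fin n → ℂ,
      (star x ⬝ᵥ A *ᵥ x).re + 2 * (star b ⬝ᵥ x).re + d < 0) :
    (∀ x : Fin n → ℂ,
        (star x ⬝ᵥ A *ᵥ x).re + 2 * (star b ⬝ᵥ x).re + d ≤ 0 →
        (star x ⬝ᵥ B *ᵥ x).re + 2 * (star c ⬝ᵥ x).re + e ≤ 0) ↔
      ∃ ω : ℝ, 0 ≤ ω ∧
        (Matrix.fromBlocks (ω • A - B)
          (Matrix.replicateCol (Fin 1) (ω • b - c))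
          (Matrix.replicateRow (Fin 1) (star (ω • b - c)))
          (Matrix.of fun _ _ => ((ω * d - e : ℝ) : ℂ))).PosSemidef := by
  have hA' := hA.homogMatrix b d
  have hB' := hB.homogMatrix c e
  simp_rw [← smul_homogMatrix_sub_homogMatrix,
    ((hA'.smul (IsSelfAdjoint.all _)).sub hB').posSemidef_iff_qform_nonneg, sub_qform, smul_qform]
  constructor
  · intro himp
    obtain ⟨x₀, hx₀⟩ := hSlater
    obtain ⟨ω, hω, hle⟩ := exists_nonneg_forall_qform_le_mul hA' hB'
      (qform_homogMatrix_nonpos_of_neg himp)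
      ⟨Sum.elim x₀ 1, by rwa [qform_homogMatrix_sumElim_one]⟩
    exact ⟨ω, hω, fun y => sub_nonneg.mpr (hle y)⟩
  · rintro ⟨ω, hω, hpsd⟩ x hx
    have hx1 := hpsd (Sum.elim x 1)
    rw [qform_homogMatrix_sumElim_one, qform_homogMatrix_sumElim_one] at hx1
    change quadFun A b d x ≤ 0 at hx
    change quadFun B c e x ≤ 0
    linarith [mul_nonpos_of_nonneg_of_nonpos hω hx]
end

section
/- Let w, f̂ ∈ ℂⁿ, δ > 0, μ ∈ ℝ. Then max over all Δf ∈ ℂⁿ with ||Δf|| ≤ δ of |(f̂ + Δf)^H w|² ≤ μ holds if and only if there exists ω ≥ 0 such that the (n+1)×(n+1) Hermitian matrix [[ω·I_n - w w^H, -w w^H f̂], [-f̂^H w w^H, -f̂^H w w^H f̂ - ω δ² + μ]] is positive semidefinite. -/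
open Matrix ComplexOrder in
lemma quad_id_aux {n : ℕ} (w fhat : Fin n → ℂ) (δ μ ω : ℝ) (v : (Fin n ⊕ Fin 1) → ℂ) :
    star v ⬝ᵥ ((Matrix.fromBlocks
          (ω • (1 : Matrix (Fin n) (Fin n) ℂ) -
            Matrix.vecMulVec w (star w))
          (Matrix.replicateCol (Fin 1)
            (fun i => -((star w ⬝ᵥ fhat) * w i)))
          (Matrix.replicateRow (Fin 1)
            (fun j => -((star fhat ⬝ᵥ w) * star (w j))))
          (Matrix.of fun _ _ =>
            -((star fhat ⬝ᵥ w) * (star w ⬝ᵥ fhat)) +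
              ((μ - ω * δ ^ 2 : ℝ) : ℂ))) *ᵥ v) =
      ((ω * ∑ i, Complex.normSq (v (Sum.inl i))
          + (μ - ω * δ ^ 2) * Complex.normSq (v (Sum.inr 0))
          - Complex.normSq ((star w ⬝ᵥ fun i => v (Sum.inl i))
              + (star w ⬝ᵥ fhat) * v (Sum.inr 0)) : ℝ) : ℂ) := by
  classical
  set c : ℂ := star w ⬝ᵥ fhat with hc
  have hconj : (star fhat ⬝ᵥ w) = star c := by
    rw [hc]; exact Matrix.star_dotProduct fhat w
  set u : (Fin n ⊕ Fin 1) → ℂ := Sum.elim w (fun _ => star c) with hu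
  have hM : (Matrix.fromBlocks
          (ω • (1 : Matrix (Fin n) (Fin n) ℂ) - Matrix.vecMulVec w (star w))
          (Matrix.replicateCol (Fin 1) (fun i => -(c * w i)))
          (Matrix.replicateRow (Fin 1) (fun j => -((star c) * star (w j))))
          (Matrix.of fun _ _ => -((star c) * c) + ((μ - ω * δ ^ 2 : ℝ) : ℂ)))
      = (Matrix.fromBlocks (ω • (1 : Matrix (Fin n) (Fin n) ℂ)) 0 0
          (Matrix.of fun _ _ => ((μ - ω * δ ^ 2 : ℝ) : ℂ)))
        - Matrix.vecMulVec u (star u) := by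
    ext i j
    rcases i with i | i <;> rcases j with j | j <;>
      simp only [Matrix.fromBlocks_apply₁₁, Matrix.fromBlocks_apply₁₂,
        Matrix.fromBlocks_apply₂₁, Matrix.fromBlocks_apply₂₂, Matrix.sub_apply,
        Matrix.vecMulVec_apply, hu, Sum.elim_inl, Sum.elim_inr, Pi.star_apply,
        Matrix.replicateCol_apply, Matrix.replicateRow_apply, Matrix.of_apply, Matrix.zero_apply,
        star_star] <;> ring
  have vecMulVec_mulVec' : (Matrix.vecMulVec u (star u)) *ᵥ v = ((star u) ⬝ᵥ v) • u := by
    ext i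
    simp only [Matrix.vecMulVec_apply, Matrix.mulVec, dotProduct, Pi.smul_apply,
      smul_eq_mul, Pi.star_apply]
    rw [Finset.sum_mul]
    exact Finset.sum_congr rfl fun j _ => by ring
  rw [hconj, hM, Matrix.sub_mulVec, dotProduct_sub, vecMulVec_mulVec',
    dotProduct_smul, smul_eq_mul, Matrix.star_dotProduct v u, Complex.star_def,
    Complex.mul_conj]
  have hq : star u ⬝ᵥ v = (star w ⬝ᵥ fun i => v (Sum.inl i)) + c * v (Sum.inr 0) := by
    simp [hu, dotProduct, Fintype.sum_sum_type, Fin.sum_univ_one, mul_comm]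
  have hD : star v ⬝ᵥ ((Matrix.fromBlocks (ω • (1 : Matrix (Fin n) (Fin n) ℂ)) 0 0
          (Matrix.of fun _ _ => ((μ - ω * δ ^ 2 : ℝ) : ℂ))) *ᵥ v)
      = ((ω * ∑ i, Complex.normSq (v (Sum.inl i))
          + (μ - ω * δ ^ 2) * Complex.normSq (v (Sum.inr 0)) : ℝ) : ℂ) := by
    simp only [dotProduct, Matrix.mulVec, Fintype.sum_sum_type, Fin.sum_univ_one,
      Matrix.fromBlocks_apply₁₁, Matrix.fromBlocks_apply₁₂, Matrix.fromBlocks_apply₂₁,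
      Matrix.fromBlocks_apply₂₂, Matrix.zero_apply, Matrix.smul_apply, Matrix.one_apply,
      Matrix.of_apply, smul_ite, smul_zero, Pi.star_apply, Complex.real_smul, mul_ite,
      mul_zero, mul_one, Finset.sum_ite_eq, Finset.mem_univ, if_true, zero_mul,
      Finset.sum_const_zero, add_zero, zero_add]
    push_cast
    rw [Finset.mul_sum]
    simp only [ite_mul, zero_mul, Finset.sum_ite_eq, Finset.mem_univ, if_true,
      ← Complex.mul_conj, Complex.star_def]
    ring_nf
    rw [show (∑ x : Fin n, (starRingEnd ℂ) (v (Sum.inl x)) * (ω : ℂ) * v (Sum.inl x))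
        = ∑ x : Fin n, (ω : ℂ) * v (Sum.inl x) * (starRingEnd ℂ) (v (Sum.inl x)) from
      Finset.sum_congr rfl fun x _ => by ring]
    ring
  rw [hq, hD]
  push_cast
  ring

open Matrix ComplexOrder in
lemma herm_lemma_aux {n : ℕ} (w fhat : EuclideanSpace ℂ (Fin n)) (δ μ ω : ℝ) :
    (Matrix.fromBlocks
          (ω • (1 : Matrix (Fin n) (Fin n) ℂ) -
            Matrix.vecMulVec (w : Fin n → ℂ) (star (w : Fin n → ℂ)))
          (Matrix.replicateCol (Fin 1)
            (fun i => -((star (w : Fin n → ℂ) ⬝ᵥ (fhat : Fin n → ℂ)) * w i)))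
          (Matrix.replicateRow (Fin 1)
            (fun j => -((star (fhat : Fin n → ℂ) ⬝ᵥ (w : Fin n → ℂ)) * star (w j))))
          (Matrix.of fun _ _ =>
            -((star (fhat : Fin n → ℂ) ⬝ᵥ (w : Fin n → ℂ)) *
               (star (w : Fin n → ℂ) ⬝ᵥ (fhat : Fin n → ℂ))) +
              ((μ - ω * δ ^ 2 : ℝ) : ℂ))).IsHermitian := by
  have hconj : (star (fhat : Fin n → ℂ) ⬝ᵥ (w : Fin n → ℂ))
      = star (star (w : Fin n → ℂ) ⬝ᵥ (fhat : Fin n → ℂ)) :=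
    Matrix.star_dotProduct _ _
  apply Matrix.IsHermitian.fromBlocks
  · show _ = _
    ext i j
    simp [Matrix.conjTranspose_apply, Matrix.one_apply, Matrix.vecMulVec_apply,
      eq_comm, mul_comm, Complex.star_def, apply_ite (starRingEnd ℂ)]
  · ext i j
    simp [Matrix.conjTranspose_apply, hconj, mul_comm]
  · show _ = _
    ext i j
    simp [Matrix.conjTranspose_apply, hconj, mul_comm, ← Complex.ofReal_pow]

lemma sum_normSq_eq_aux {n : ℕ} (x : EuclideanSpace ℂ (Fin n)) :
    ∑ i, Complex.normSq (x i) = ‖x‖ ^ 2 := by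
  rw [EuclideanSpace.norm_eq, Real.sq_sqrt (by positivity)]
  simp [Complex.normSq_eq_norm_sq]

open Matrix in
lemma abs_dot_le_aux {n : ℕ} (w x : EuclideanSpace ℂ (Fin n)) :
    ‖star (w : Fin n → ℂ) ⬝ᵥ (x : Fin n → ℂ)‖ ≤ ‖w‖ * ‖x‖ := by
  have h := norm_inner_le_norm (𝕜 := ℂ) w x
  rw [EuclideanSpace.inner_eq_star_dotProduct, dotProduct_comm] at h
  simpa using h

open Matrix in
lemma dot_self_eq_aux {n : ℕ} (w : EuclideanSpace ℂ (Fin n)) :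
    star (w : Fin n → ℂ) ⬝ᵥ (w : Fin n → ℂ) = ((‖w‖ ^ 2 : ℝ) : ℂ) := by
  have h := inner_self_eq_norm_sq_to_K (𝕜 := ℂ) w
  rw [EuclideanSpace.inner_eq_star_dotProduct, dotProduct_comm] at h
  simpa using h

lemma real_ineq_aux (W C δ μ s τ Q : ℝ) (hδ : 0 < δ) (hW : 0 ≤ W) (hC : 0 ≤ C)
    (hkey : (C + δ * W) ^ 2 ≤ μ)
    (hQ : Q ≤ (W * s + C * τ) ^ 2) :
    0 ≤ (W ^ 2 + W * C / δ) * s ^ 2 + (μ - (W ^ 2 + W * C / δ) * δ ^ 2) * τ ^ 2 - Q := by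
  have h1 : 0 ≤ (W * C / δ) * (s - δ * τ) ^ 2 :=
    mul_nonneg (div_nonneg (mul_nonneg hW hC) hδ.le) (sq_nonneg _)
  have e3 : (W * C / δ) * (s - δ * τ) ^ 2
      = (W * C / δ) * s ^ 2 - 2 * (W * C) * s * τ + (W * C * δ) * τ ^ 2 := by
    field_simp
    ring
  have e4 : (W * C / δ) * δ ^ 2 = W * C * δ := by
    field_simp
  nlinarith [mul_nonneg (sub_nonneg.2 hkey) (sq_nonneg τ)]

open Matrix in
lemma dot_conv_aux {n : ℕ} (w fhat Δf : EuclideanSpace ℂ (Fin n)) :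
    ‖star ((fhat + Δf : EuclideanSpace ℂ (Fin n)) : Fin n → ℂ) ⬝ᵥ (w : Fin n → ℂ)‖
      = ‖(star (w : Fin n → ℂ) ⬝ᵥ (fhat : Fin n → ℂ))
          + (star (w : Fin n → ℂ) ⬝ᵥ (Δf : Fin n → ℂ))‖ := by
  rw [Matrix.star_dotProduct, norm_star]
  congr 1
  exact dotProduct_add _ _ _

open Matrix in
lemma key_bound_aux {n : ℕ} (w fhat : EuclideanSpace ℂ (Fin n)) (δ μ : ℝ) (hδ : 0 < δ)
    (h : ∀ Δf : EuclideanSpace ℂ (Fin n), ‖Δf‖ ≤ δ →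
        ‖star ((fhat + Δf : EuclideanSpace ℂ (Fin n)) : Fin n → ℂ) ⬝ᵥ (w : Fin n → ℂ)‖ ^ 2 ≤ μ) :
    (‖star (w : Fin n → ℂ) ⬝ᵥ (fhat : Fin n → ℂ)‖ + δ * ‖w‖) ^ 2 ≤ μ := by
  set c : ℂ := star (w : Fin n → ℂ) ⬝ᵥ (fhat : Fin n → ℂ) with hc
  by_cases hw : w = 0
  · have h0 := h 0 (by simp [hδ.le])
    rw [dot_conv_aux] at h0
    simp [hw, hc] at h0 ⊢
    simpa [hw] using h0
  · have hwpos : 0 < ‖w‖ := norm_pos_iff.2 hw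
    set α : ℂ := if c = 0 then 1 else c / ((‖c‖ : ℝ) : ℂ) with hα
    have hαabs : ‖α‖ = 1 := by
      by_cases h0 : c = 0
      · simp [hα, h0]
      · simp [hα, h0, map_div₀, norm_div, Complex.norm_real, abs_of_nonneg (norm_nonneg c),
          div_self (norm_ne_zero_iff.mpr h0)]
    have hcα : c = ((‖c‖ : ℝ) : ℂ) * α := by
      by_cases h0 : c = 0
      · simp [hα, h0]
      · rw [hα, if_neg h0]
        rw [mul_div_cancel₀]
        simpa using h0
    set k : ℂ := ((δ / ‖w‖ : ℝ) : ℂ) * α with hk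
    have hnΔf : ‖(k • w : EuclideanSpace ℂ (Fin n))‖ = δ := by
      rw [norm_smul, hk, norm_mul, Complex.norm_real, hαabs,
        Real.norm_eq_abs, abs_of_nonneg (by positivity)]
      field_simp
    have hdot : star (w : Fin n → ℂ) ⬝ᵥ ((k • w : EuclideanSpace ℂ (Fin n)) : Fin n → ℂ)
        = ((δ * ‖w‖ : ℝ) : ℂ) * α := by
      show star (w : Fin n → ℂ) ⬝ᵥ (k • (w : Fin n → ℂ)) = _
      rw [dotProduct_smul, smul_eq_mul, dot_self_eq_aux, hk]
      have hwne : ((‖w‖ : ℝ) : ℂ) ≠ 0 := by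
        exact_mod_cast hwpos.ne'
      push_cast
      field_simp
    have hμ := h (k • w) (le_of_eq hnΔf)
    rw [dot_conv_aux, hdot, ← hc] at hμ
    have habs : ‖c + ((δ * ‖w‖ : ℝ) : ℂ) * α‖ = ‖c‖ + δ * ‖w‖ := by
      nth_rewrite 1 [hcα]
      rw [← add_mul, norm_mul, hαabs, mul_one, ← Complex.ofReal_add, Complex.norm_real, Real.norm_eq_abs,
        abs_of_nonneg (by positivity)]
    rwa [habs] at hμ

open Matrix ComplexOrder in
theorem stmt_6 {n : ℕ} (w fhat : EuclideanSpace ℂ (Fin n)) (δ μ : ℝ) (hδ : 0 < δ) :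
    (∀ Δf : EuclideanSpace ℂ (Fin n), ‖Δf‖ ≤ δ →
        ‖star ((fhat + Δf : EuclideanSpace ℂ (Fin n)) : Fin n → ℂ) ⬝ᵥ (w : Fin n → ℂ)‖ ^ 2 ≤ μ) ↔
      ∃ ω : ℝ, 0 ≤ ω ∧
        (Matrix.fromBlocks
          (ω • (1 : Matrix (Fin n) (Fin n) ℂ) -
            Matrix.vecMulVec (w : Fin n → ℂ) (star (w : Fin n → ℂ)))
          (Matrix.replicateCol (Fin 1)
            (fun i => -((star (w : Fin n → ℂ) ⬝ᵥ (fhat : Fin n → ℂ)) * w i)))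
          (Matrix.replicateRow (Fin 1)
            (fun j => -((star (fhat : Fin n → ℂ) ⬝ᵥ (w : Fin n → ℂ)) * star (w j))))
          (Matrix.of fun _ _ =>
            -((star (fhat : Fin n → ℂ) ⬝ᵥ (w : Fin n → ℂ)) *
               (star (w : Fin n → ℂ) ⬝ᵥ (fhat : Fin n → ℂ))) +
              ((μ - ω * δ ^ 2 : ℝ) : ℂ))).PosSemidef := by
  constructor
  · intro h
    have hkey := key_bound_aux w fhat δ μ hδ h
    refine ⟨‖w‖ ^ 2 + ‖w‖ * ‖star (w : Fin n → ℂ) ⬝ᵥ (fhat : Fin n → ℂ)‖ / δ,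
      by positivity, Matrix.PosSemidef.of_dotProduct_mulVec_nonneg (herm_lemma_aux w fhat δ μ _) fun v => ?_⟩
    rw [quad_id_aux, Complex.zero_le_real]
    set x : EuclideanSpace ℂ (Fin n) := WithLp.toLp 2 (fun i => v (Sum.inl i)) with hx
    have hS : ∑ i, Complex.normSq (v (Sum.inl i)) = ‖x‖ ^ 2 := sum_normSq_eq_aux x
    have hτ : Complex.normSq (v (Sum.inr 0)) = ‖v (Sum.inr 0)‖ ^ 2 :=
      (Complex.sq_norm _).symm
    have hQ : Complex.normSq ((star (w : Fin n → ℂ) ⬝ᵥ fun i => v (Sum.inl i))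
          + (star (w : Fin n → ℂ) ⬝ᵥ (fhat : Fin n → ℂ)) * v (Sum.inr 0))
        ≤ (‖w‖ * ‖x‖ + ‖star (w : Fin n → ℂ) ⬝ᵥ (fhat : Fin n → ℂ)‖
            * ‖v (Sum.inr 0)‖) ^ 2 := by
      rw [← Complex.sq_norm]
      apply pow_le_pow_left₀ (norm_nonneg _)
      calc ‖_‖ ≤ ‖star (w : Fin n → ℂ) ⬝ᵥ fun i => v (Sum.inl i)‖
            + ‖(star (w : Fin n → ℂ) ⬝ᵥ (fhat : Fin n → ℂ)) * v (Sum.inr 0)‖ :=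
          norm_add_le _ _
        _ ≤ _ := by
          rw [norm_mul]
          exact add_le_add (abs_dot_le_aux w x) le_rfl
    rw [hS, hτ]
    exact real_ineq_aux ‖w‖ (‖star (w : Fin n → ℂ) ⬝ᵥ (fhat : Fin n → ℂ)‖) δ μ
      ‖x‖ (‖v (Sum.inr 0)‖) _ hδ (norm_nonneg _) (norm_nonneg _) hkey hQ
  · rintro ⟨ω, hω, hpsd⟩ Δf hΔf
    have h2 := hpsd.dotProduct_mulVec_nonneg (Sum.elim (Δf : Fin n → ℂ) (fun _ => 1))
    rw [quad_id_aux, Complex.zero_le_real] at h2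
    simp only [Sum.elim_inl, Sum.elim_inr] at h2
    rw [dot_conv_aux, Complex.sq_norm]
    have hS : ∑ i, Complex.normSq (Δf i) = ‖Δf‖ ^ 2 := sum_normSq_eq_aux Δf
    rw [hS] at h2
    have hq : Complex.normSq ((star (w : Fin n → ℂ) ⬝ᵥ (Δf : Fin n → ℂ))
          + (star (w : Fin n → ℂ) ⬝ᵥ (fhat : Fin n → ℂ)) * 1)
        = Complex.normSq ((star (w : Fin n → ℂ) ⬝ᵥ (fhat : Fin n → ℂ))
          + (star (w : Fin n → ℂ) ⬝ᵥ (Δf : Fin n → ℂ))) := by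
      rw [mul_one, add_comm]
    rw [hq] at h2
    have hd2 : ‖Δf‖ ^ 2 ≤ δ ^ 2 := by
      have := norm_nonneg Δf
      nlinarith
    have := mul_le_mul_of_nonneg_left hd2 hω
    simp only [Complex.normSq_one, mul_one] at h2
    linarith
end
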